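/- arXiv:1604.03448 — 2 statements merged into one kernel-verified Lean document; each statement's English description precedes it below -/
import Mathlib

section
/- Separable inputs do not increase the channel max-relative entropy of entanglement: Let T : M_{d_{A'}}(ℂ) → M_{d_{B'}}(ℂ) be a quantum channel and let σ_{AA'B} be a density matrix on ℂ^{d_A} ⊗ ℂ^{d_{A'}} ⊗ ℂ^{d_B} that is separable w.r.t. the bipartition AA' : B. Then E_max^{A:B'B}((id_A ⊗ T ⊗ id_B)(σ_{AA'B})) ≤ E_max(T), where the output state on ℂ^{d_A} ⊗ ℂ^{d_{B'}} ⊗ ℂ^{d_B} is measured across the bipartition A : B'B. -/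
open Matrix
open scoped Kronecker ComplexOrder
attribute [local instance] Classical.propDecidable

noncomputable section

/-- Real power of a Hermitian matrix via the continuous functional calculus
(with the Moore–Penrose convention `0 ^ r = 0` for `r ≠ 0`). -/
def matRPow {n : Type*} [Fintype n] [DecidableEq n] (A : Matrix n n ℂ) (r : ℝ) :
    Matrix n n ℂ :=
  cfc (fun x : ℝ => x ^ r) A

/-- Base-2 matrix logarithm via the continuous functional calculus. -/
def matLog2 {n : Type*} [Fintype n] [DecidableEq n] (A : Matrix n n ℂ) : Matrix n n ℂ :=
  cfc (fun x : ℝ => Real.logb 2 x) A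

/-- A density matrix: positive semidefinite with unit trace. -/
def IsState {n : Type*} [Fintype n] (ρ : Matrix n n ℂ) : Prop :=
  ρ.PosSemidef ∧ ρ.trace = 1

/-- The sandwiched α-Rényi divergence
`D_α(ρ‖σ) = (α−1)⁻¹ · log₂ tr[(σ^((1−α)/(2α)) ρ σ^((1−α)/(2α)))^α]`. -/
def sandwichedRenyi {n : Type*} [Fintype n] [DecidableEq n] (α : ℝ) (ρ σ : Matrix n n ℂ) : ℝ :=
  (α - 1)⁻¹ *
    Real.logb 2
      (matRPow (matRPow σ ((1 - α) / (2 * α)) * ρ * matRPow σ ((1 - α) / (2 * α))) α).trace.re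

/-- The Umegaki relative entropy `D(ρ‖σ) = tr[ρ log₂ ρ] − tr[ρ log₂ σ]`. -/
def relEnt {n : Type*} [Fintype n] [DecidableEq n] (ρ σ : Matrix n n ℂ) : ℝ :=
  ((ρ * matLog2 ρ).trace - (ρ * matLog2 σ).trace).re

/-- The max-relative entropy `D_max(ρ‖σ) = log₂ inf{c > 0 : c·σ − ρ ⪰ 0}` (with value `⊤`
if no such `c` exists). -/
def Dmax {n : Type*} [Fintype n] (ρ σ : Matrix n n ℂ) : EReal :=
  ⨅ c : {c : ℝ // 0 < c ∧ ((c : ℝ) • σ - ρ).PosSemidef}, ((Real.logb 2 (c : ℝ) : ℝ) : EReal)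

/-- Support inclusion for positive semidefinite matrices, expressed as domination:
`supp ρ ⊆ supp σ` iff `ρ ≤ c·σ` for some `c > 0`. -/
def supportLe {n : Type*} [Fintype n] (ρ σ : Matrix n n ℂ) : Prop :=
  ∃ c : ℝ, 0 < c ∧ ((c : ℝ) • σ - ρ).PosSemidef

/-- Extended-real-valued sandwiched α-Rényi divergence, `⊤` if the support condition fails. -/
def DalphaE {n : Type*} [Fintype n] [DecidableEq n] (α : ℝ) (ρ σ : Matrix n n ℂ) : EReal :=
  if supportLe ρ σ then ((sandwichedRenyi α ρ σ : ℝ) : EReal) else ⊤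

/-- Extended-real-valued Umegaki relative entropy, `⊤` if the support condition fails. -/
def DrelE {n : Type*} [Fintype n] [DecidableEq n] (ρ σ : Matrix n n ℂ) : EReal :=
  if supportLe ρ σ then ((relEnt ρ σ : ℝ) : EReal) else ⊤

/-- Separability of a bipartite state w.r.t. the bipartition given by the product index. -/
def IsSepState {A B : Type*} [Fintype A] [Fintype B]
    (σ : Matrix (A × B) (A × B) ℂ) : Prop :=
  ∃ (k : ℕ) (p : Fin k → ℝ) (τ₁ : Fin k → Matrix A A ℂ) (τ₂ : Fin k → Matrix B B ℂ),
    (∀ i, 0 ≤ p i) ∧ (∑ i, p i = 1) ∧ (∀ i, IsState (τ₁ i)) ∧ (∀ i, IsState (τ₂ i)) ∧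
      σ = ∑ i, (p i : ℂ) • (τ₁ i ⊗ₖ τ₂ i)

/-- The max-relative entropy of entanglement of a bipartite state. -/
def EmaxState {A B : Type*} [Fintype A] [Fintype B]
    (ρ : Matrix (A × B) (A × B) ℂ) : EReal :=
  ⨅ σ : {σ : Matrix (A × B) (A × B) ℂ // IsSepState σ}, Dmax ρ (σ : Matrix (A × B) (A × B) ℂ)

/-- The α-relative entropy of entanglement of a bipartite state. -/
def EalphaState {A B : Type*} [Fintype A] [Fintype B] [DecidableEq A] [DecidableEq B]
    (α : ℝ) (ρ : Matrix (A × B) (A × B) ℂ) : EReal :=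
  ⨅ σ : {σ : Matrix (A × B) (A × B) ℂ // IsSepState σ}, DalphaE α ρ (σ : Matrix (A × B) (A × B) ℂ)

/-- The relative entropy of entanglement of a bipartite state. -/
def ERState {A B : Type*} [Fintype A] [Fintype B] [DecidableEq A] [DecidableEq B]
    (ρ : Matrix (A × B) (A × B) ℂ) : EReal :=
  ⨅ σ : {σ : Matrix (A × B) (A × B) ℂ // IsSepState σ}, DrelE ρ (σ : Matrix (A × B) (A × B) ℂ)

/-- Partial application `id_R ⊗ T` of a map `T` to the second tensor factor. -/
def applyRight {R A B : Type*} (T : Matrix A A ℂ → Matrix B B ℂ)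
    (ρ : Matrix (R × A) (R × A) ℂ) : Matrix (R × B) (R × B) ℂ :=
  Matrix.of fun x y => T (Matrix.of fun a a' => ρ (x.1, a) (y.1, a')) x.2 y.2

/-- Partial application `id_R ⊗ T ⊗ id_S` of a map `T` to the middle tensor factor. -/
def applyMiddle {R A B S : Type*} (T : Matrix A A ℂ → Matrix B B ℂ)
    (ρ : Matrix (R × A × S) (R × A × S) ℂ) : Matrix (R × B × S) (R × B × S) ℂ :=
  Matrix.of fun x y => T (Matrix.of fun a a' => ρ (x.1, a, x.2.2) (y.1, a', y.2.2)) x.2.1 y.2.1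

/-- Regroup a tripartite index `A × (B × C)` as `(A × B) × C`. -/
def assocL {A B C : Type*} (ρ : Matrix (A × B × C) (A × B × C) ℂ) :
    Matrix ((A × B) × C) ((A × B) × C) ℂ :=
  ρ.submatrix (Equiv.prodAssoc A B C) (Equiv.prodAssoc A B C)

/-- The (normalized) Choi matrix `(id ⊗ T)(ω)` of a linear map `T`. -/
def choi {A B : Type*} [Fintype A] [DecidableEq A] (T : Matrix A A ℂ → Matrix B B ℂ) :
    Matrix (A × B) (A × B) ℂ :=
  Matrix.of fun x y => ((Fintype.card A : ℂ))⁻¹ * T (Matrix.single x.1 y.1 1) x.2 y.2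

/-- A quantum channel: linear, trace-preserving and completely positive
(the latter expressed by positive semidefiniteness of the Choi matrix). -/
def IsQChannel {A B : Type*} [Fintype A] [Fintype B] [DecidableEq A]
    (T : Matrix A A ℂ → Matrix B B ℂ) : Prop :=
  IsLinearMap ℂ T ∧ (∀ X, (T X).trace = X.trace) ∧ (choi T).PosSemidef

/-- The max-relative entropy of entanglement of a quantum channel:
`E_max(T) = sup {E_max^{R:B}((id_R ⊗ T)(ρ)) : ρ a state on R ⊗ A, dim R arbitrary}`. -/
def EmaxChan {A B : Type*} [Fintype A] [Fintype B]
    (T : Matrix A A ℂ → Matrix B B ℂ) : EReal :=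
  ⨆ (dR : ℕ) (ρ : {ρ : Matrix (Fin dR × A) (Fin dR × A) ℂ // IsState ρ}),
    EmaxState (applyRight T (ρ : Matrix (Fin dR × A) (Fin dR × A) ℂ))

/-- Partial trace over the second tensor factor. -/
def ptraceSnd {B C : Type*} [Fintype C] (M : Matrix (B × C) (B × C) ℂ) : Matrix B B ℂ :=
  Matrix.of fun b b' => ∑ c : C, M (b, c) (b', c)

/-- Partial trace over the third tensor factor. -/
def ptraceThird {A B C : Type*} [Fintype C] (ρ : Matrix (A × B × C) (A × B × C) ℂ) :
    Matrix (A × B) (A × B) ℂ :=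
  Matrix.of fun x y => ∑ c : C, ρ (x.1, x.2, c) (y.1, y.2, c)

/-- Tensoring with the identity on a third factor: `M ⊗ I_C` on `A ⊗ B ⊗ C`. -/
def tensorId3 {A B C : Type*} [DecidableEq C] [Fintype C] (M : Matrix (A × B) (A × B) ℂ) :
    Matrix (A × B × C) (A × B × C) ℂ :=
  (M ⊗ₖ (1 : Matrix C C ℂ)).submatrix (Equiv.prodAssoc A B C).symm (Equiv.prodAssoc A B C).symm

end
noncomputable section

/-- The trace norm `‖M‖₁ = tr[(M†M)^{1/2}]`. -/
def traceNorm {n : Type*} [Fintype n] [DecidableEq n] (M : Matrix n n ℂ) : ℝ :=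
  (matRPow (Mᴴ * M) (1 / 2 : ℝ)).trace.re

/-- The weighted trace norm `‖X‖_{1,τ} = tr|τ^{1/2} X τ^{1/2}|`. -/
def wnorm1 {n : Type*} [Fintype n] [DecidableEq n] (τ X : Matrix n n ℂ) : ℝ :=
  traceNorm (matRPow τ (1 / 2 : ℝ) * X * matRPow τ (1 / 2 : ℝ))

/-- The spectral (operator) norm of a matrix, as the operator norm of the induced
linear map on Euclidean space. -/
def specNorm {n : Type*} [Fintype n] [DecidableEq n] (M : Matrix n n ℂ) : ℝ :=
  ‖LinearMap.toContinuousLinearMap (Matrix.toEuclideanLin M)‖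

/-- The `d × d` quantum Fourier transform, `(U)_{jk} = e^{2πi jk/d}/√d` for `j,k ∈ {1,…,d}`. -/
def fourierMat (d : ℕ) : Matrix (Fin d) (Fin d) ℂ :=
  Matrix.of fun j k =>
    Complex.exp (2 * (Real.pi : ℂ) * Complex.I * ((((j : ℕ) : ℂ) + 1) * (((k : ℕ) : ℂ) + 1))
        / (d : ℂ)) / ((Real.sqrt d : ℝ) : ℂ)

/-- `U_1 = 1` and `U_2` the quantum Fourier transform. -/
def flowerU (d : ℕ) : Fin 2 → Matrix (Fin d) (Fin d) ℂ :=
  fun l => if l = 0 then 1 else fourierMat d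

/-- The flower state `ρ^f = (1/2d) Σ_{i,k} Σ_{j,l} ⟨k|U_l† U_j|i⟩ |ii⟩⟨kk|_{AB} ⊗ |jj⟩⟨ll|_{A'B'}`,
written on the index `(A × A') × (B × B')` (input system times output system). -/
def flowerState (d : ℕ) :
    Matrix ((Fin d × Fin 2) × (Fin d × Fin 2)) ((Fin d × Fin 2) × (Fin d × Fin 2)) ℂ :=
  Matrix.of fun x y =>
    if x.2.1 = x.1.1 ∧ x.2.2 = x.1.2 ∧ y.2.1 = y.1.1 ∧ y.2.2 = y.1.2 then
      (1 / (2 * (d : ℂ))) * (((flowerU d y.1.2)ᴴ * flowerU d x.1.2) y.1.1 x.1.1)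
    else 0

/-- `p = 1/(√d + 1)`. -/
def pparam (d : ℕ) : ℝ := 1 / (Real.sqrt d + 1)

/-- `Y = (1/d) Σ_{i,j} u_{ij} |ii⟩⟨jj|` on `ℂ^d_A ⊗ ℂ^d_B`, `u` the QFT entries. -/
def Ymat (d : ℕ) : Matrix (Fin d × Fin d) (Fin d × Fin d) ℂ :=
  Matrix.of fun x y =>
    if x.1 = x.2 ∧ y.1 = y.2 then (1 / (d : ℂ)) * fourierMat d x.1 y.1 else 0

/-- The blocks of the separable comparison Choi matrix `C_S`, indexed by the `A'B'` qubit pair. -/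
def CSblock (d : ℕ) (i j : Fin 2 × Fin 2) : Matrix (Fin d × Fin d) (Fin d × Fin d) ℂ :=
  if i = j then
    if i = (0, 1) then ((2 * pparam d : ℝ) : ℂ) • matRPow (Ymat d * (Ymat d)ᴴ) (1 / 2 : ℝ)
    else if i = (1, 0) then ((2 * pparam d : ℝ) : ℂ) • matRPow ((Ymat d)ᴴ * Ymat d) (1 / 2 : ℝ)
    else (((1 - pparam d) / (d ^ 2 : ℝ) : ℝ) : ℂ) • (1 : Matrix (Fin d × Fin d) (Fin d × Fin d) ℂ)
  else 0

/-- The separable comparison Choi matrix `C_S` on `ℂ²_{A'} ⊗ ℂ²_{B'} ⊗ ℂ^d_A ⊗ ℂ^d_B`,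
written on the index `(A' × A) × (B' × B)` grouping the bipartition `(A'A) : (B'B)`. -/
def CSmat (d : ℕ) :
    Matrix ((Fin 2 × Fin d) × (Fin 2 × Fin d)) ((Fin 2 × Fin d) × (Fin 2 × Fin d)) ℂ :=
  Matrix.of fun x y =>
    (1 / (2 * (1 + pparam d) : ℝ) : ℂ) *
      CSblock d (x.1.1, x.2.1) (y.1.1, y.2.1) (x.1.2, x.2.2) (y.1.2, y.2.2)

/-- The blocks of the matrix `M` (the partially transposed state), indexed by the `A'B'`
qubit pair. -/
def Mblock (d : ℕ) (i j : Fin 2 × Fin 2) : Matrix (Fin d × Fin d) (Fin d × Fin d) ℂ :=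
  if i = j then
    if i = (0, 1) then ((pparam d : ℝ) : ℂ) • matRPow (Ymat d * (Ymat d)ᴴ) (1 / 2 : ℝ)
    else if i = (1, 0) then ((pparam d : ℝ) : ℂ) • matRPow ((Ymat d)ᴴ * Ymat d) (1 / 2 : ℝ)
    else (((1 - pparam d) / (d ^ 2 : ℝ) : ℝ) : ℂ) • (1 : Matrix (Fin d × Fin d) (Fin d × Fin d) ℂ)
  else if i = (0, 1) ∧ j = (1, 0) then ((pparam d : ℝ) : ℂ) • Ymat d
  else if i = (1, 0) ∧ j = (0, 1) then ((pparam d : ℝ) : ℂ) • (Ymat d)ᴴ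
  else 0

/-- The matrix `M` on `ℂ²_{A'} ⊗ ℂ²_{B'} ⊗ ℂ^d_A ⊗ ℂ^d_B`, written on the index
`(A' × A) × (B' × B)`. -/
def Mmat (d : ℕ) :
    Matrix ((Fin 2 × Fin d) × (Fin 2 × Fin d)) ((Fin 2 × Fin d) × (Fin 2 × Fin d)) ℂ :=
  Matrix.of fun x y =>
    (1 / 2 : ℂ) * Mblock d (x.1.1, x.2.1) (y.1.1, y.2.1) (x.1.2, x.2.2) (y.1.2, y.2.2)

end

/-! Write `σ = Σᵢ pᵢ τᵢ ⊗ ωᵢ` with `τᵢ` a state on `AA'` and `ωᵢ` a state on `B`. Since `T` is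
linear, the output is `Σᵢ pᵢ (id_A ⊗ T)(τᵢ) ⊗ ωᵢ`. Each `(id_A ⊗ T)(τᵢ)` is dominated by
`cᵢ Sᵢ` with `Sᵢ` separable on `A : B'` and `log₂ cᵢ` close to `E_max(T)`; then the output is
dominated by `(maxᵢ cᵢ) · Σᵢ pᵢ Sᵢ ⊗ ωᵢ`, which is separable on `A : B'B`. -/

def assocR {A B C : Type*} (ρ : Matrix ((A × B) × C) ((A × B) × C) ℂ) :
    Matrix (A × B × C) (A × B × C) ℂ :=
  ρ.submatrix (Equiv.prodAssoc A B C).symm (Equiv.prodAssoc A B C).symm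

section Regrouping

variable {A B C : Type*}

theorem assocR_assocL (ρ : Matrix (A × B × C) (A × B × C) ℂ) : assocR (assocL ρ) = ρ := by
  ext x y
  rfl

theorem assocR_sum_smul {ι : Type*} [Fintype ι] (p : ι → ℂ)
    (ρ : ι → Matrix ((A × B) × C) ((A × B) × C) ℂ) :
    assocR (∑ i, p i • ρ i) = ∑ i, p i • assocR (ρ i) := by
  ext x y
  simp [assocR, Matrix.sum_apply]

end Regrouping

section Channels

variable {R A B S : Type*} {T : Matrix A A ℂ → Matrix B B ℂ}

theorem applyMiddle_sum_smul (hT : IsLinearMap ℂ T) {ι : Type*} [Fintype ι] (p : ι → ℂ)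
    (ρ : ι → Matrix (R × A × S) (R × A × S) ℂ) :
    applyMiddle T (∑ i, p i • ρ i) = ∑ i, p i • applyMiddle T (ρ i) := by
  ext x y
  have hin : (of fun a a' => (∑ i, p i • ρ i) (x.1, a, x.2.2) (y.1, a', y.2.2))
      = ∑ i, p i • of fun a a' => ρ i (x.1, a, x.2.2) (y.1, a', y.2.2) := by
    ext
    simp [Matrix.sum_apply]
  simp only [applyMiddle, of_apply]
  rw [hin, show T = IsLinearMap.mk' T hT from rfl, map_sum]
  simp only [map_smul, Matrix.sum_apply, Matrix.smul_apply]
  rfl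

theorem applyMiddle_assocR_kronecker (hT : IsLinearMap ℂ T) (τ : Matrix (R × A) (R × A) ℂ)
    (ω : Matrix S S ℂ) :
    applyMiddle T (assocR (τ ⊗ₖ ω)) = assocR (applyRight T τ ⊗ₖ ω) := by
  ext x y
  have hin : (of fun a a' => assocR (τ ⊗ₖ ω) (x.1, a, x.2.2) (y.1, a', y.2.2))
      = ω x.2.2 y.2.2 • of fun a a' => τ (x.1, a) (y.1, a') := by
    ext
    simp [assocR, mul_comm]
  simp only [applyMiddle, of_apply, hin, hT.map_smul]
  simp [assocR, applyRight, mul_comm]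

end Channels

section Separable

variable {A B : Type*} [Fintype A] [Fintype B]

theorem IsState.kronecker {τ : Matrix A A ℂ} {ω : Matrix B B ℂ} (hτ : IsState τ)
    (hω : IsState ω) : IsState (τ ⊗ₖ ω) :=
  ⟨hτ.1.kronecker hω.1, by rw [trace_kronecker, hτ.2, hω.2, one_mul]⟩

theorem IsSepState.posSemidef {σ : Matrix (A × B) (A × B) ℂ} (hσ : IsSepState σ) :
    σ.PosSemidef := by
  obtain ⟨k, p, τ, ω, hp, -, hτ, hω, rfl⟩ := hσ
  exact posSemidef_sum _ fun i _ =>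
    (hτ i).1.kronecker (hω i).1 |>.smul (Complex.zero_le_real.mpr (hp i))

theorem isSepState_sum_smul_kronecker {ι : Type*} [Fintype ι] (p : ι → ℝ)
    (τ : ι → Matrix A A ℂ) (ω : ι → Matrix B B ℂ) (hp : ∀ i, 0 ≤ p i) (hp₁ : ∑ i, p i = 1)
    (hτ : ∀ i, IsState (τ i)) (hω : ∀ i, IsState (ω i)) :
    IsSepState (∑ i, (p i : ℂ) • (τ i ⊗ₖ ω i)) := by
  let e := (Fintype.equivFin ι).symm
  refine ⟨Fintype.card ι, p ∘ e, τ ∘ e, ω ∘ e, fun i => hp _, ?_, fun i => hτ _,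
    fun i => hω _, ?_⟩
  · rw [← hp₁]
    exact Fintype.sum_equiv e _ _ fun i => rfl
  · exact (Fintype.sum_equiv e _ _ fun i => rfl).symm

theorem isSepState_sum_smul {ι : Type*} [Fintype ι] (p : ι → ℝ)
    (σ : ι → Matrix (A × B) (A × B) ℂ) (hp : ∀ i, 0 ≤ p i) (hp₁ : ∑ i, p i = 1)
    (hσ : ∀ i, IsSepState (σ i)) :
    IsSepState (∑ i, (p i : ℂ) • σ i) := by
  choose k q τ ω hq hq₁ hτ hω hσ using hσ
  have hsum : ∑ i, (p i : ℂ) • σ i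
      = ∑ x : Σ i, Fin (k i), ((p x.1 * q x.1 x.2 : ℝ) : ℂ) • (τ x.1 x.2 ⊗ₖ ω x.1 x.2) := by
    simp_rw [← Finset.univ_sigma_univ, Finset.sum_sigma, hσ, Finset.smul_sum, smul_smul,
      Complex.ofReal_mul]
  rw [hsum]
  refine isSepState_sum_smul_kronecker _ _ _ (fun x => mul_nonneg (hp _) (hq _ _)) ?_
    (fun x => hτ x.1 x.2) (fun x => hω x.1 x.2)
  simp_rw [← Finset.univ_sigma_univ, Finset.sum_sigma, ← Finset.mul_sum, hq₁, mul_one, hp₁]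

theorem IsSepState.assocR_kronecker {C : Type*} [Fintype C] {σ : Matrix (A × B) (A × B) ℂ}
    (hσ : IsSepState σ) {ω : Matrix C C ℂ} (hω : IsState ω) :
    IsSepState (assocR (σ ⊗ₖ ω)) := by
  obtain ⟨k, p, τ₁, τ₂, hp, hp₁, hτ₁, hτ₂, rfl⟩ := hσ
  have hsum : assocR ((∑ i, (p i : ℂ) • (τ₁ i ⊗ₖ τ₂ i)) ⊗ₖ ω)
      = ∑ i, (p i : ℂ) • (τ₁ i ⊗ₖ (τ₂ i ⊗ₖ ω)) := by
    ext x y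
    simp [assocR, Matrix.sum_apply, Finset.sum_mul, mul_assoc]
  rw [hsum]
  exact isSepState_sum_smul_kronecker p τ₁ _ hp hp₁ hτ₁ fun i => (hτ₂ i).kronecker hω

end Separable

section MaxRelativeEntropy

theorem Matrix.PosSemidef.smul_sub_of_le {n : Type*} {ρ σ : Matrix n n ℂ} {c c' : ℝ}
    (h : (c • σ - ρ).PosSemidef) (hσ : σ.PosSemidef) (hc : c ≤ c') :
    (c' • σ - ρ).PosSemidef := by
  have hsplit : c' • σ - ρ = (c • σ - ρ) + (c' - c) • σ := by
    rw [sub_smul]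
    abel
  rw [hsplit]
  exact h.add (hσ.smul (sub_nonneg.mpr hc))

variable {n : Type*} [Fintype n]

theorem Dmax_le_logb {ρ σ : Matrix n n ℂ} {c : ℝ} (hc : 0 < c) (h : (c • σ - ρ).PosSemidef) :
    Dmax ρ σ ≤ (Real.logb 2 c : EReal) :=
  iInf_le (fun c : {c : ℝ // 0 < c ∧ (c • σ - ρ).PosSemidef} => (Real.logb 2 c : EReal))
    ⟨c, hc, h⟩

variable {A B : Type*} [Fintype A] [Fintype B]

theorem EmaxState_le_Dmax {ρ σ : Matrix (A × B) (A × B) ℂ} (hσ : IsSepState σ) :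
    EmaxState ρ ≤ Dmax ρ σ :=
  iInf_le (fun σ : {σ : Matrix (A × B) (A × B) ℂ // IsSepState σ} => Dmax ρ σ) ⟨σ, hσ⟩

theorem exists_isSepState_of_EmaxState_lt {ρ : Matrix (A × B) (A × B) ℂ} {y : EReal}
    (h : EmaxState ρ < y) :
    ∃ (σ : Matrix (A × B) (A × B) ℂ) (c : ℝ), IsSepState σ ∧ 0 < c ∧
      (c • σ - ρ).PosSemidef ∧ (Real.logb 2 c : EReal) < y := by
  obtain ⟨⟨σ, hσ⟩, hlt⟩ := iInf_lt_iff.mp h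
  obtain ⟨⟨c, hc, hcσ⟩, hclt⟩ := iInf_lt_iff.mp hlt
  exact ⟨σ, c, hσ, hc, hcσ, hclt⟩

theorem EmaxState_applyRight_le_EmaxChan {dR : ℕ} (T : Matrix A A ℂ → Matrix B B ℂ)
    {ρ : Matrix (Fin dR × A) (Fin dR × A) ℂ} (hρ : IsState ρ) :
    EmaxState (applyRight T ρ) ≤ EmaxChan T :=
  le_iSup₂_of_le (f := fun dR (ρ : {ρ : Matrix (Fin dR × A) (Fin dR × A) ℂ // IsState ρ}) =>
    EmaxState (applyRight T ρ.1)) dR ⟨ρ, hρ⟩ le_rfl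

theorem EmaxState_sum_smul_assocR_kronecker_le {C ι : Type*} [Fintype C] [Fintype ι]
    (p : ι → ℝ) (hp : ∀ i, 0 ≤ p i) (hp₁ : ∑ i, p i = 1)
    (ρ : ι → Matrix (A × B) (A × B) ℂ) (ω : ι → Matrix C C ℂ) (hω : ∀ i, IsState (ω i))
    {y : EReal} (hρ : ∀ i, EmaxState (ρ i) ≤ y) :
    EmaxState (∑ i, (p i : ℂ) • assocR (ρ i ⊗ₖ ω i)) ≤ y := by
  refine le_of_forall_gt_imp_ge_of_dense fun z hz => ?_
  choose σ c hσ hc hcσ hcz using fun i => exists_isSepState_of_EmaxState_lt ((hρ i).trans_lt hz)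
  have : Nonempty ι := by
    by_contra h
    simp [not_nonempty_iff.mp h] at hp₁
  obtain ⟨i₀, hi₀⟩ := Finite.exists_max c
  have hdom : (c i₀ • ∑ i, (p i : ℂ) • assocR (σ i ⊗ₖ ω i)
      - ∑ i, (p i : ℂ) • assocR (ρ i ⊗ₖ ω i)).PosSemidef := by
    have hsum : c i₀ • ∑ i, (p i : ℂ) • assocR (σ i ⊗ₖ ω i)
        - ∑ i, (p i : ℂ) • assocR (ρ i ⊗ₖ ω i)
        = ∑ i, (p i : ℂ) • assocR ((c i₀ • σ i - ρ i) ⊗ₖ ω i) := by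
      ext x y
      simp only [assocR, Complex.coe_smul, Matrix.sub_apply, Matrix.smul_apply, Matrix.sum_apply,
        submatrix_apply, Equiv.prodAssoc_symm_apply, kroneckerMap_apply, Complex.real_smul,
        Finset.mul_sum, ← Finset.sum_sub_distrib, sub_mul]
      exact Finset.sum_congr rfl fun i _ => by ring
    rw [hsum]
    exact posSemidef_sum _ fun i _ =>
      (hcσ i).smul_sub_of_le (hσ i).posSemidef (hi₀ i) |>.kronecker (hω i).1 |>.submatrix _
        |>.smul (Complex.zero_le_real.mpr (hp i))
  calc EmaxState (∑ i, (p i : ℂ) • assocR (ρ i ⊗ₖ ω i))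
      ≤ Dmax _ (∑ i, (p i : ℂ) • assocR (σ i ⊗ₖ ω i)) :=
        EmaxState_le_Dmax (isSepState_sum_smul p _ hp hp₁ fun i => (hσ i).assocR_kronecker (hω i))
    _ ≤ (Real.logb 2 (c i₀) : EReal) := Dmax_le_logb (hc i₀) hdom
    _ ≤ z := (hcz i₀).le

end MaxRelativeEntropy

theorem separable_input_emax_general
    {dA' dB' : ℕ} (T : Matrix (Fin dA') (Fin dA') ℂ → Matrix (Fin dB') (Fin dB') ℂ)
    (hT : IsQChannel T) (dA dB : ℕ)
    (σ : Matrix (Fin dA × Fin dA' × Fin dB) (Fin dA × Fin dA' × Fin dB) ℂ)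
    (hsep : IsSepState (assocL σ)) :
    EmaxState (applyMiddle T σ) ≤ EmaxChan T := by
  obtain ⟨k, p, τ, ω, hp, hp₁, hτ, hω, hdec⟩ := hsep
  have hσ : σ = ∑ i, (p i : ℂ) • assocR (τ i ⊗ₖ ω i) := by
    rw [← assocR_assocL σ, hdec, assocR_sum_smul]
  rw [hσ, applyMiddle_sum_smul hT.1]
  simp only [applyMiddle_assocR_kronecker hT.1]
  exact EmaxState_sum_smul_assocR_kronecker_le p hp hp₁ _ ω hω fun i =>
    EmaxState_applyRight_le_EmaxChan T (hτ i)

/-- **Separable inputs do not increase the channel max-relative entropy of entanglement**: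
if `σ_{AA'B}` is separable w.r.t `AA' : B`, then
`E_max^{A:B'B}((id_A ⊗ T ⊗ id_B)(σ_{AA'B})) ≤ E_max(T)`. -/
theorem separable_input_emax
    {dA' dB' : ℕ} (T : Matrix (Fin dA') (Fin dA') ℂ → Matrix (Fin dB') (Fin dB') ℂ)
    (hT : IsQChannel T) (dA dB : ℕ)
    (σ : Matrix (Fin dA × Fin dA' × Fin dB) (Fin dA × Fin dA' × Fin dB) ℂ)
    (hσ : IsState σ) (hsep : IsSepState (assocL σ)) :
    EmaxState (applyMiddle T σ) ≤ EmaxChan T :=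
  separable_input_emax_general T hT dA dB σ hsep
end

section
/- Separability of the comparison Choi matrix in the repeater example: Fix d ∈ ℕ, d ≥ 2, set p = 1/(√d + 1), and let U be the d×d quantum Fourier transform with entries u_{jk} = e^{2πijk/d}/√d. Define Y = (1/d) Σ_{i,j=1}^d u_{ij} |ii⟩⟨jj| ∈ M_{d²}(ℂ), acting on ℂ^d_A ⊗ ℂ^d_B. On the space ℂ²_{A'} ⊗ ℂ²_{B'} ⊗ ℂ^d_A ⊗ ℂ^d_B, regarded as a 2×2-block-of-2×2-blocks matrix over the A'B' qubit indices with entries in M_{d²}(ℂ), define C_S = (1/(2(1+p))) · diag[(1−p)·(I_d/d)⊗(I_d/d), 2p·√(YY†), 2p·√(Y†Y), (1−p)·(I_d/d)⊗(I_d/d)], the four diagonal blocks corresponding to the A'B' basis states |00⟩, |01⟩, |10⟩, |11⟩ and all off-diagonal blocks zero. Then C_S is a density matrix that is separable with respect to the bipartition (A'A) : (B'B). -/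
open Matrix
open scoped Kronecker ComplexOrder
attribute [local instance] Classical.propDecidable

/-!
Let `V : |i⟩ ↦ |ii⟩` be the isometry onto the maximally correlated subspace of `ℂ^d ⊗ ℂ^d`.
Then `Y = d⁻¹ • V U V†` with `U` the (unitary) Fourier matrix, so `√(YY†) = √(Y†Y) = d⁻¹ • V V†`
is diagonal in the product basis. Hence `C_S` is a diagonal density matrix, and a diagonal state
is a convex combination of the product states `|a⟩⟨a| ⊗ |b⟩⟨b|`.
-/

section States

variable {n : Type*} [Fintype n] [DecidableEq n]

lemma isState_diagonal {c : n → ℝ} (hc : 0 ≤ c) (hsum : ∑ i, c i = 1) :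
    IsState (diagonal fun i => (c i : ℂ)) := by
  refine ⟨posSemidef_diagonal_iff.mpr fun i => Complex.zero_le_real.mpr (hc i), ?_⟩
  rw [trace_diagonal, ← Complex.ofReal_sum, hsum, Complex.ofReal_one]

lemma isState_single (a : n) : IsState (single a a (1 : ℂ)) := by
  rw [← diagonal_single]
  convert isState_diagonal (c := Pi.single a 1) (Pi.single_nonneg.mpr zero_le_one)
    (by simp) using 3 with i
  rcases eq_or_ne i a with rfl | h <;> simp [*]

end States

lemma isSepState_diagonal {A B : Type*} [Fintype A] [Fintype B] [DecidableEq A] [DecidableEq B]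
    {c : A × B → ℝ} (hc : 0 ≤ c) (hsum : ∑ x, c x = 1) :
    IsSepState (diagonal fun x => (c x : ℂ)) := by
  let e := (Fintype.equivFin (A × B)).symm
  refine ⟨Fintype.card (A × B), c ∘ e, fun i => single (e i).1 (e i).1 1,
    fun i => single (e i).2 (e i).2 1, fun i => hc (e i), by rwa [Function.comp_def, e.sum_comp],
    fun i => isState_single _, fun i => isState_single _, ?_⟩
  simp only [Function.comp_apply, single_kronecker_single, mul_one]
  rw [e.sum_comp (fun x => ((c x : ℝ) : ℂ) • single (x.1, x.2) (x.1, x.2) (1 : ℂ))]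
  simp only [Prod.mk.eta, smul_single, smul_eq_mul, mul_one, sum_single_eq_diagonal]

section SquareRoot

variable {m n : Type*} [Fintype m] [DecidableEq m] [Fintype n] [DecidableEq n]

open scoped MatrixOrder in
lemma matRPow_half_eq_of_mul_self {A B : Matrix m m ℂ} (hB : B.PosSemidef) (h : B * B = A) :
    matRPow A (1 / 2 : ℝ) = B := by
  have hA : 0 ≤ A := by
    rw [← h]
    nth_rewrite 1 [← hB.1.eq]
    exact (posSemidef_conjTranspose_mul_self B).nonneg
  have hsqrt : (fun x : ℝ => x ^ (1 / 2 : ℝ)) = Real.sqrt :=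
    funext fun x => (Real.sqrt_eq_rpow x).symm
  rw [matRPow, hsqrt, ← cfcₙ_eq_cfc, ← CFC.sqrt_eq_real_sqrt A hA]
  exact CFC.sqrt_unique h hB.nonneg

lemma matRPow_half_mul_conjTranspose_of_isometry {V : Matrix m n ℂ} (hV : Vᴴ * V = 1)
    {U : Matrix n n ℂ} (hU : U ∈ unitary (Matrix n n ℂ)) {c : ℝ} (hc : 0 ≤ c) :
    matRPow (((c : ℂ) • (V * U * Vᴴ)) * ((c : ℂ) • (V * U * Vᴴ))ᴴ) (1 / 2 : ℝ)
      = (c : ℂ) • (V * Vᴴ) := by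
  have hproj : V * Vᴴ * (V * Vᴴ) = V * Vᴴ := by
    rw [Matrix.mul_assoc, ← Matrix.mul_assoc Vᴴ, hV, Matrix.one_mul]
  refine matRPow_half_eq_of_mul_self
    ((posSemidef_self_mul_conjTranspose V).smul (Complex.zero_le_real.mpr hc)) ?_
  have hUU : U * Uᴴ = 1 := Matrix.mem_unitaryGroup_iff.mp hU
  have hY : ((c : ℂ) • (V * U * Vᴴ))ᴴ = (c : ℂ) • (V * Uᴴ * Vᴴ) := by
    simp [conjTranspose_smul, Matrix.mul_assoc]
  rw [hY, smul_mul_smul_comm, smul_mul_smul_comm, hproj]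
  congr 1
  symm
  calc V * U * Vᴴ * (V * Uᴴ * Vᴴ) = V * U * (Vᴴ * V) * Uᴴ * Vᴴ := by simp only [Matrix.mul_assoc]
    _ = V * Vᴴ := by rw [hV, Matrix.mul_one, Matrix.mul_assoc V, hUU, Matrix.mul_one]

lemma matRPow_half_conjTranspose_mul_of_isometry {V : Matrix m n ℂ} (hV : Vᴴ * V = 1)
    {U : Matrix n n ℂ} (hU : U ∈ unitary (Matrix n n ℂ)) {c : ℝ} (hc : 0 ≤ c) :
    matRPow (((c : ℂ) • (V * U * Vᴴ))ᴴ * ((c : ℂ) • (V * U * Vᴴ))) (1 / 2 : ℝ)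
      = (c : ℂ) • (V * Vᴴ) := by
  have hY : ((c : ℂ) • (V * U * Vᴴ))ᴴ = (c : ℂ) • (V * Uᴴ * Vᴴ) := by
    simp [conjTranspose_smul, Matrix.mul_assoc]
  rw [hY, ← conjTranspose_conjTranspose ((c : ℂ) • (V * U * Vᴴ)), hY]
  exact matRPow_half_mul_conjTranspose_of_isometry hV (Unitary.star_mem hU) hc

end SquareRoot

section Fourier

open Complex

lemma sum_fin_pow_succ_of_pow_eq_one {K : Type*} [Field K] {d : ℕ} {ω : K} (hω : ω ^ d = 1) :
    ∑ k : Fin d, ω ^ ((k : ℕ) + 1) = if ω = 1 then (d : K) else 0 := by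
  split_ifs with h
  · simp [h]
  · simp_rw [pow_succ']
    rw [← Finset.mul_sum, Fin.sum_univ_eq_sum_range (ω ^ ·), geom_sum_eq h, hω, sub_self,
      zero_div, mul_zero]

lemma fourierMat_apply (d : ℕ) (j k : Fin d) :
    fourierMat d j k = exp (2 * Real.pi * I / d) ^ (((j : ℕ) + 1) * ((k : ℕ) + 1)) / (√d : ℝ) := by
  rw [fourierMat, of_apply, ← exp_nat_mul]
  push_cast
  ring_nf

lemma fourierMat_mem_unitary {d : ℕ} (hd : d ≠ 0) :
    fourierMat d ∈ unitary (Matrix (Fin d) (Fin d) ℂ) := by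
  set ζ := exp (2 * Real.pi * I / d)
  have hζ : IsPrimitiveRoot ζ d := isPrimitiveRoot_exp d hd
  have hζ0 : ζ ≠ 0 := hζ.ne_zero hd
  have hstar : star ζ = ζ⁻¹ := by
    rw [Complex.star_def, ← Complex.exp_conj, ← exp_neg]
    simp [map_div₀, conj_ofReal, neg_div, map_ofNat]
  have hsqrt : ((√d : ℝ) : ℂ) * (√d : ℝ) = d := by
    rw [← ofReal_mul, Real.mul_self_sqrt d.cast_nonneg, ofReal_natCast]
  rw [Matrix.mem_unitaryGroup_iff]
  ext j l
  set ω := ζ ^ ((j : ℕ) + 1) * ζ⁻¹ ^ ((l : ℕ) + 1) with hω_def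
  have hω : ω ^ d = 1 := by
    rw [hω_def, mul_pow, ← pow_mul, ← pow_mul, mul_comm _ d, mul_comm _ d, pow_mul, pow_mul,
      inv_pow, hζ.pow_eq_one]
    simp
  have hω1 : ω = 1 ↔ j = l := by
    rw [hω_def, inv_pow, mul_inv_eq_one₀ (pow_ne_zero _ hζ0), pow_succ, pow_succ,
      mul_left_inj' hζ0]
    exact ⟨fun h => Fin.ext (hζ.pow_inj j.2 l.2 h), fun h => h ▸ rfl⟩
  have hterm : ∀ k, fourierMat d j k * star (fourierMat d l k) = ω ^ ((k : ℕ) + 1) / d := by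
    intro k
    rw [fourierMat_apply, fourierMat_apply, star_div₀, star_pow, hstar, Complex.star_def,
      conj_ofReal, div_mul_div_comm, hsqrt, mul_pow, ← pow_mul, ← pow_mul]
  simp only [mul_apply, star_apply, hterm]
  rw [← Finset.sum_div, sum_fin_pow_succ_of_pow_eq_one hω, one_apply]
  simp only [hω1]
  split_ifs
  · exact div_self (Nat.cast_ne_zero.mpr hd)
  · exact zero_div _

end Fourier

section DiagEmbed

def diagEmbed (n : Type*) [DecidableEq n] : Matrix (n × n) n ℂ :=
  of fun x i => if x = (i, i) then 1 else 0

variable {n : Type*} [Fintype n] [DecidableEq n]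

lemma diagEmbed_mul_apply {p : Type*} (M : Matrix n p ℂ) (a b : n) (j : p) :
    (diagEmbed n * M) (a, b) j = if a = b then M a j else 0 := by
  simp only [diagEmbed, mul_apply, of_apply, Prod.mk.injEq, ite_mul, one_mul, zero_mul]
  split_ifs with h
  · subst h
    simp
  · exact Finset.sum_eq_zero fun i _ => if_neg fun hi => h (hi.1.trans hi.2.symm)

lemma mul_conjTranspose_diagEmbed_apply {p : Type*} (M : Matrix p n ℂ) (i : p) (a b : n) :
    (M * (diagEmbed n)ᴴ) i (a, b) = if a = b then M i a else 0 := by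
  rw [← conjTranspose_conjTranspose M, ← conjTranspose_mul, conjTranspose_apply,
    diagEmbed_mul_apply]
  split_ifs <;> simp

variable (n)

lemma conjTranspose_diagEmbed_mul_diagEmbed : (diagEmbed n)ᴴ * diagEmbed n = 1 := by
  ext i j
  simp [diagEmbed, mul_apply, one_apply, eq_comm]

lemma diagEmbed_mul_conjTranspose_diagEmbed :
    diagEmbed n * (diagEmbed n)ᴴ = diagonal fun x => if x.1 = x.2 then 1 else 0 := by
  ext ⟨a, b⟩ ⟨c, e⟩
  rw [diagEmbed_mul_apply, conjTranspose_apply, diagonal_apply]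
  simp only [diagEmbed, of_apply, Prod.mk.injEq, apply_ite star, star_one, star_zero]
  split_ifs <;> grind

end DiagEmbed

lemma Ymat_eq (d : ℕ) : Ymat d
    = (((d : ℝ)⁻¹ : ℝ) : ℂ) • (diagEmbed (Fin d) * fourierMat d * (diagEmbed (Fin d))ᴴ) := by
  ext ⟨a, b⟩ ⟨c, e⟩
  rw [Matrix.smul_apply, mul_conjTranspose_diagEmbed_apply, diagEmbed_mul_apply, Ymat, of_apply]
  by_cases hab : a = b <;> by_cases hce : c = e <;> simp [*]

section ComparisonChoi

variable {d : ℕ}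

lemma pparam_pos : 0 < pparam d := by
  unfold pparam
  positivity

lemma pparam_le_one : pparam d ≤ 1 := by
  rw [pparam, div_le_one (by positivity)]
  linarith [Real.sqrt_nonneg d]

lemma matRPow_Ymat_mul_conjTranspose (hd : d ≠ 0) :
    matRPow (Ymat d * (Ymat d)ᴴ) (1 / 2 : ℝ)
      = (((d : ℝ)⁻¹ : ℝ) : ℂ) • (diagEmbed (Fin d) * (diagEmbed (Fin d))ᴴ) := by
  rw [Ymat_eq]
  exact matRPow_half_mul_conjTranspose_of_isometry (conjTranspose_diagEmbed_mul_diagEmbed _)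
    (fourierMat_mem_unitary hd) (by positivity)

lemma matRPow_conjTranspose_Ymat_mul (hd : d ≠ 0) :
    matRPow ((Ymat d)ᴴ * Ymat d) (1 / 2 : ℝ)
      = (((d : ℝ)⁻¹ : ℝ) : ℂ) • (diagEmbed (Fin d) * (diagEmbed (Fin d))ᴴ) := by
  rw [Ymat_eq]
  exact matRPow_half_conjTranspose_mul_of_isometry (conjTranspose_diagEmbed_mul_diagEmbed _)
    (fourierMat_mem_unitary hd) (by positivity)

noncomputable def CSblockDiag (d : ℕ) (i : Fin 2 × Fin 2) (a : Fin d × Fin d) : ℝ :=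
  if i.1 = i.2 then (1 - pparam d) / d ^ 2 else if a.1 = a.2 then 2 * pparam d / d else 0

lemma CSblock_eq_diagonal (hd : d ≠ 0) (i j : Fin 2 × Fin 2) :
    CSblock d i j = if i = j then diagonal fun a => (CSblockDiag d i a : ℂ) else 0 := by
  rw [CSblock, matRPow_Ymat_mul_conjTranspose hd, matRPow_conjTranspose_Ymat_mul hd,
    diagEmbed_mul_conjTranspose_diagEmbed]
  split_ifs with hij h01 h10
  · subst hij h01
    ext a b
    rcases eq_or_ne a b with rfl | hab <;>
      simp [CSblockDiag, apply_ite Complex.ofReal, div_eq_mul_inv, *]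
  · subst hij h10
    ext a b
    rcases eq_or_ne a b with rfl | hab <;>
      simp [CSblockDiag, apply_ite Complex.ofReal, div_eq_mul_inv, *]
  · subst hij
    have hdiag : i.1 = i.2 := by
      revert h01 h10
      rcases i with ⟨a, b⟩
      fin_cases a <;> fin_cases b <;> simp
    ext a b
    rcases eq_or_ne a b with rfl | hab <;> simp [CSblockDiag, *]
  · rfl

noncomputable def CSdiag (d : ℕ) (x : (Fin 2 × Fin d) × (Fin 2 × Fin d)) : ℝ :=
  (2 * (1 + pparam d))⁻¹ * CSblockDiag d (x.1.1, x.2.1) (x.1.2, x.2.2)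

lemma CSmat_eq_diagonal (hd : d ≠ 0) : CSmat d = diagonal fun x => (CSdiag d x : ℂ) := by
  ext ⟨⟨i₁, a₁⟩, ⟨i₂, a₂⟩⟩ ⟨⟨j₁, b₁⟩, ⟨j₂, b₂⟩⟩
  simp only [CSmat, of_apply, CSblock_eq_diagonal hd, diagonal_apply, CSdiag]
  split_ifs <;> simp_all [div_eq_inv_mul]

lemma CSdiag_nonneg : 0 ≤ CSdiag d := by
  intro x
  have := pparam_le_one (d := d)
  have := pparam_pos (d := d)
  unfold CSdiag CSblockDiag
  split_ifs <;> positivity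

lemma sum_CSblockDiag (hd : d ≠ 0) : ∑ i, ∑ a, CSblockDiag d i a = 2 * (1 + pparam d) := by
  simp only [CSblockDiag, Fintype.sum_prod_type, Fin.sum_univ_two, Fin.isValue, zero_ne_one,
    one_ne_zero, ↓reduceIte, Finset.sum_ite_irrel, Finset.sum_ite_eq, Finset.mem_univ,
    Finset.sum_const, Finset.card_univ, Fintype.card_prod, Fintype.card_fin, nsmul_eq_mul,
    Nat.cast_mul]
  field_simp
  ring

lemma sum_CSdiag (hd : d ≠ 0) : ∑ x, CSdiag d x = 1 := by
  have h := pparam_pos (d := d)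
  simp only [CSdiag]
  rw [← Finset.mul_sum, Fintype.sum_equiv (Equiv.prodProdProdComm _ _ _ _)
      (fun x => CSblockDiag d (x.1.1, x.2.1) (x.1.2, x.2.2)) (fun y => CSblockDiag d y.1 y.2)
      fun _ => rfl,
    Fintype.sum_prod_type, sum_CSblockDiag hd]
  field_simp

end ComparisonChoi

/-- **Separability of the comparison Choi matrix** in the repeater example: `C_S` is a density
matrix that is separable w.r.t. the bipartition `(A'A) : (B'B)`. -/
theorem repeater_CS_separable (d : ℕ) (hd : 2 ≤ d) :
    IsState (CSmat d) ∧ IsSepState (CSmat d) := by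
  have hd0 : d ≠ 0 := by omega
  rw [CSmat_eq_diagonal hd0]
  exact ⟨isState_diagonal CSdiag_nonneg (sum_CSdiag hd0),
    isSepState_diagonal CSdiag_nonneg (sum_CSdiag hd0)⟩
end
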